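/- Proposition 4 (main convergence result): under Assumption 1 and the γ/α setup, let α = max_i α_i. For every initial vector x(0) ∈ ℝ^n there exists a finite time K such that for all k ≥ K, either (a) the values cycle in a small neighborhood of the average: |x_i(k) − x_j(k)| ≤ α_i + α_j for all agents i, j, and |x_i(k) − x_ave| ≤ 2α for every agent i; or (b) quantized consensus is reached: ⌊x_i(k)⌋ = ⌊x_j(k)⌋ for all agents i, j, and |x_i(k) − x_ave| < 1 for every agent i. -/

import Mathlib

open Finset Filter

/-- Assumption 1 on the weight matrix `W` relative to the graph `G`:
symmetric, nonnegative, rows sum to 1, diagonally dominant (`w_ii > 1/2`),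
respects the communication graph, and rational weights in `(0,1)` on edges. -/
def Assumption1 {n : ℕ} (G : SimpleGraph (Fin n)) (W : Matrix (Fin n) (Fin n) ℝ) : Prop :=
  (∀ i j, W i j = W j i) ∧
  (∀ i j, 0 ≤ W i j) ∧
  (∀ i, ∑ j, W i j = 1) ∧
  (∀ i, 1 / 2 < W i i) ∧
  (∀ i j, i ≠ j → ¬G.Adj i j → W i j = 0) ∧
  (∀ i j, G.Adj i j → (∃ q : ℚ, (q : ℝ) = W i j) ∧ 0 < W i j ∧ W i j < 1)

/-- The quantized system `x(k+1) = W ⌊x(k)⌋ + x(k) − ⌊x(k)⌋`, componentwise. -/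
def Traj {n : ℕ} (W : Matrix (Fin n) (Fin n) ℝ) (x : ℕ → Fin n → ℝ) : Prop :=
  ∀ k i, x (k + 1) i = (∑ j, W i j * (⌊x k j⌋ : ℝ)) + x k i - (⌊x k i⌋ : ℝ)

/-- `m(k) = min_i ⌊x_i(k)⌋`. -/
noncomputable def mfun {n : ℕ} (hn : 0 < n) (x : ℕ → Fin n → ℝ) (k : ℕ) : ℤ :=
  Finset.univ.inf' ⟨⟨0, hn⟩, Finset.mem_univ _⟩ fun i => ⌊x k i⌋

/-- `M(k) = max_i ⌊x_i(k)⌋`. -/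
noncomputable def Mfun {n : ℕ} (hn : 0 < n) (x : ℕ → Fin n → ℝ) (k : ℕ) : ℤ :=
  Finset.univ.sup' ⟨⟨0, hn⟩, Finset.mem_univ _⟩ fun i => ⌊x k i⌋

/-- The γ gap conditions (fractional part `c_i(k) = x_i(k) − ⌊x_i(k)⌋`). -/
def GammaSetup {n : ℕ} (W : Matrix (Fin n) (Fin n) ℝ) (x : ℕ → Fin n → ℝ) (γ : ℝ) : Prop :=
  0 < γ ∧
  ∀ i k,
    (x k i - (⌊x k i⌋ : ℝ) > 1 - W i i → x k i - (⌊x k i⌋ : ℝ) - (1 - W i i) ≥ 2 * γ) ∧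
    (1 - (x k i - (⌊x k i⌋ : ℝ)) > 1 - W i i →
      1 - (x k i - (⌊x k i⌋ : ℝ)) - (1 - W i i) ≥ 2 * γ) ∧
    1 - (x k i - (⌊x k i⌋ : ℝ)) ≥ 2 * γ ∧
    1 / 2 - (1 - W i i) ≥ 2 * γ

/-- `α_i = 1 − w_ii + γ`. -/
noncomputable def alpha {n : ℕ} (W : Matrix (Fin n) (Fin n) ℝ) (γ : ℝ) (i : Fin n) : ℝ :=
  1 - W i i + γ

/-- The Lyapunov function `V(k) = Σ_i max{|x_i(k) − m(k) − 1| − α_i, 0}`. -/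
noncomputable def Vfun {n : ℕ} (hn : 0 < n) (W : Matrix (Fin n) (Fin n) ℝ) (γ : ℝ)
    (x : ℕ → Fin n → ℝ) (k : ℕ) : ℝ :=
  ∑ i, max (|x k i - (mfun hn x k : ℝ) - 1| - alpha W γ i) 0

/-- `δ = min_{(p,q) ∈ E} w_pq`. -/
noncomputable def deltaMin {n : ℕ} (G : SimpleGraph (Fin n)) (W : Matrix (Fin n) (Fin n) ℝ) : ℝ :=
  sInf {r : ℝ | ∃ p q, G.Adj p q ∧ r = W p q}

open Classical in
/-- `T_s(k0,k)`: number of times `t ∈ [k0,k]` at which node `s` lies in `X1 ∪ X2`,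
i.e. `x_s(t) < m(t) + 1`. -/
noncomputable def Tcount {n : ℕ} (hn : 0 < n) (x : ℕ → Fin n → ℝ) (s : Fin n)
    (k0 k : ℕ) : ℕ :=
  ((Finset.Icc k0 k).filter fun t => x t s < (mfun hn x t : ℝ) + 1).card


/-!
The weights are rational, so `x k - x 0` lies in a lattice `Q⁻¹ ℤⁿ`; the least floor never
decreases and the largest never increases, so the trajectory takes finitely many values and is
eventually periodic. Along the periodic tail every monotone quantity is constant; let `m` be the
least floor there.

Lower side: `x i ≥ m + w_ii` is preserved by the dynamics. A node violating it stays at floor `m`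
with nondecreasing value; constancy forces all its neighbours, and by connectivity all nodes, to
floor `m`: this is quantized consensus.

Upper side: clip the floors from below at `m + 1`. The excess `(x i - (m + 2 - w_ii))⁺` of a
node grows by at most the net flow of clipped floors into it, so the total excess is
nonincreasing, hence constant, and every node balance is exact. A node above its threshold stays
above and has only neighbours of floor `≥ m + 1`; a node below it has only neighbours of floor
`≤ m + 1`. Propagating along the graph, one node above its threshold would lift every floor to
`≥ m + 1`, which is absurd. So unless consensus holds, `|x i - (m + 1)| ≤ 1 - w_ii`.
-/

section Periodic

variable {α β : Type*}

def IsPeriodicFrom (x : ℕ → α) (k₁ p : ℕ) : Prop :=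
  0 < p ∧ ∀ k, k₁ ≤ k → x (k + p) = x k

theorem IsPeriodicFrom.comp {x : ℕ → α} {k₁ p : ℕ} (hx : IsPeriodicFrom x k₁ p) (f : α → β) :
    IsPeriodicFrom (fun k => f (x k)) k₁ p :=
  ⟨hx.1, fun k hk => congrArg f (hx.2 k hk)⟩

theorem IsPeriodicFrom.eq_of_monotone [PartialOrder α] {g : ℕ → α} {k₁ p : ℕ}
    (hg : IsPeriodicFrom g k₁ p) (hmono : ∀ k, k₁ ≤ k → g k ≤ g (k + 1)) :
    ∀ k, k₁ ≤ k → g k = g k₁ := by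
  intro k hk
  have hshift : Monotone fun t => g (k₁ + t) :=
    monotone_nat_of_le_succ fun t => hmono _ (Nat.le_add_right _ _)
  have hret : ∀ t, g (k₁ + t * p) = g k₁ := by
    intro t
    induction t with
    | zero => simp
    | succ t ih => rw [Nat.succ_mul, ← add_assoc, hg.2 _ (Nat.le_add_right _ _), ih]
  obtain ⟨t, rfl⟩ := Nat.exists_eq_add_of_le hk
  refine le_antisymm ?_ (hshift (Nat.zero_le t))
  calc g (k₁ + t) ≤ g (k₁ + t * p) := hshift (Nat.le_mul_of_pos_right t hg.1)
    _ = g k₁ := hret t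

theorem IsPeriodicFrom.eq_of_antitone [PartialOrder α] {g : ℕ → α} {k₁ p : ℕ}
    (hg : IsPeriodicFrom g k₁ p) (hanti : ∀ k, k₁ ≤ k → g (k + 1) ≤ g k) :
    ∀ k, k₁ ≤ k → g k = g k₁ :=
  IsPeriodicFrom.eq_of_monotone (α := αᵒᵈ) hg hanti

theorem exists_isPeriodicFrom_of_mem_finite {x : ℕ → α}
    (hx : ∀ a b, x a = x b → x (a + 1) = x (b + 1)) {s : Set α} (hs : s.Finite)
    (hxs : ∀ k, x k ∈ s) :
    ∃ k₁ p, IsPeriodicFrom x k₁ p := by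
  obtain ⟨a, b, hab, heq⟩ := hs.exists_lt_map_eq_of_forall_mem hxs
  have hshift : ∀ t, x (a + t) = x (b + t) := by
    intro t
    induction t with
    | zero => exact heq
    | succ t ih => rw [← add_assoc, ← add_assoc, hx _ _ ih]
  refine ⟨a, b - a, Nat.sub_pos_of_lt hab, fun k hk => ?_⟩
  obtain ⟨t, rfl⟩ := Nat.exists_eq_add_of_le hk
  rw [show a + t + (b - a) = b + t by omega]
  exact (hshift t).symm

end Periodic

theorem SimpleGraph.Connected.mem_of_adj_closed {V : Type*} {G : SimpleGraph V}
    (hG : G.Connected) {S : Set V} (hS : ∀ a b, G.Adj a b → a ∈ S → b ∈ S) {a : V} (ha : a ∈ S)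
    (b : V) : b ∈ S := by
  obtain ⟨w⟩ := hG.preconnected a b
  induction w with
  | nil => exact ha
  | cons h _ ih => exact ih (hS _ _ h ha)

theorem mul_nonneg_of_pos_imp {w d : ℝ} (hw : 0 ≤ w) (hd : 0 < w → 0 ≤ d) : 0 ≤ w * d := by
  rcases hw.eq_or_lt with h0 | hpos
  · simp [← h0]
  · exact mul_nonneg hpos.le (hd hpos)

theorem eq_zero_of_sum_mul_eq_zero {ι : Type*} [Fintype ι] {w d : ι → ℝ} (hw : ∀ j, 0 ≤ w j)
    (hd : ∀ j, 0 < w j → 0 ≤ d j) (h : ∑ j, w j * d j = 0) {j : ι} (hj : 0 < w j) : d j = 0 :=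
  (mul_eq_zero.mp ((sum_eq_zero_iff_of_nonneg fun j _ => mul_nonneg_of_pos_imp (hw j) (hd j)).mp
    h j (mem_univ j))).resolve_left hj.ne'

theorem average_mem {n : ℕ} (hn : 0 < n) {s : Set ℝ} (hs : Convex ℝ s) {y : Fin n → ℝ}
    (hy : ∀ i, y i ∈ s) : 1 / (n : ℝ) * ∑ i, y i ∈ s := by
  have hw : ∑ _i : Fin n, 1 / (n : ℝ) = 1 := by
    rw [sum_const, card_univ, Fintype.card_fin, nsmul_eq_mul]
    field_simp
  simpa [mul_sum] using hs.sum_mem (fun _ _ => by positivity) hw fun i _ => hy i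

theorem abs_sub_average_le {n : ℕ} (hn : 0 < n) {y : Fin n → ℝ} {c r : ℝ}
    (h : ∀ j, |y j - c| ≤ r) (i : Fin n) : |y i - 1 / (n : ℝ) * ∑ j, y j| ≤ 2 * r := by
  have hmem : ∀ j, y j ∈ Set.Icc (c - r) (c + r) := fun j => by
    have := abs_le.mp (h j)
    constructor <;> linarith
  have havg := average_mem hn (convex_Icc _ _) hmem
  rw [abs_sub_le_iff]
  constructor <;> linarith [(hmem i).1, (hmem i).2, havg.1, havg.2]

theorem abs_sub_average_lt_one {n : ℕ} (hn : 0 < n) {y : Fin n → ℝ} {c : ℤ}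
    (h : ∀ j, ⌊y j⌋ = c) (i : Fin n) : |y i - 1 / (n : ℝ) * ∑ j, y j| < 1 := by
  refine Int.abs_sub_lt_one_of_floor_eq_floor ((h i).trans (Int.floor_eq_iff.mpr ?_).symm)
  exact average_mem hn (convex_Ico _ _) fun j => Int.floor_eq_iff.mp (h j)

theorem finite_setOf_mem_Icc_mul_sub_mem_range (a b c : ℝ) {Q : ℝ} (hQ : 0 < Q) :
    {y : ℝ | y ∈ Set.Icc a b ∧ Q * (y - c) ∈ (Int.castRingHom ℝ).range}.Finite := by
  refine ((Set.finite_Icc ⌈Q * (a - c)⌉ ⌊Q * (b - c)⌋).image fun z : ℤ => c + z / Q).subset ?_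
  rintro y ⟨⟨hay, hyb⟩, z, hz⟩
  simp only [eq_intCast] at hz
  refine ⟨z, ⟨Int.ceil_le.mpr ?_, Int.le_floor.mpr ?_⟩, ?_⟩
  · rw [hz]; gcongr
  · rw [hz]; gcongr
  · simp only [hz]
    field_simp
    ring

theorem exists_nat_mul_mem_range_intCast {ι : Type*} [Fintype ι] (r : ι → ℝ)
    (hr : ∀ i, r i ∈ (Rat.castHom ℝ).range) :
    ∃ Q : ℕ, 0 < Q ∧ ∀ i, (Q : ℝ) * r i ∈ (Int.castRingHom ℝ).range := by
  choose q hq using hr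
  refine ⟨∏ i, (q i).den, prod_pos fun i _ => (q i).pos, fun i => ?_⟩
  obtain ⟨t, ht⟩ := dvd_prod_of_mem (fun i => (q i).den) (mem_univ i)
  refine ⟨t * (q i).num, ?_⟩
  have h : ((t : ℚ) * (q i).num) = ((q i).den * t : ℕ) * q i := by
    rw [← Rat.mul_den_eq_num]
    push_cast
    ring
  rw [← hq i, ht]
  simp only [eq_intCast, Rat.coe_castHom]
  exact_mod_cast h

section Dynamics

variable {n : ℕ} {W : Matrix (Fin n) (Fin n) ℝ} {x : ℕ → Fin n → ℝ}

theorem Assumption1.mem_range_ratCast {G : SimpleGraph (Fin n)} (hW : Assumption1 G W)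
    (i j : Fin n) : W i j ∈ (Rat.castHom ℝ).range := by
  obtain ⟨-, -, hrow, -, hzero, hedge⟩ := hW
  have hoff : ∀ i j, i ≠ j → W i j ∈ (Rat.castHom ℝ).range := fun i j hij => by
    by_cases h : G.Adj i j
    · obtain ⟨q, hq⟩ := (hedge i j h).1
      exact ⟨q, hq⟩
    · rw [hzero i j hij h]
      exact zero_mem _
  rcases eq_or_ne i j with rfl | hij
  · have hdiag : W i i = 1 - ∑ j ∈ univ.erase i, W i j := by
      rw [← hrow i, ← add_sum_erase _ _ (mem_univ i)]
      ring
    rw [hdiag]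
    exact sub_mem (one_mem _) (sum_mem fun j hj => hoff i j (ne_of_mem_erase hj).symm)
  · exact hoff i j hij

theorem diag_le_one (hnn : ∀ i j, 0 ≤ W i j) (hrow : ∀ i, ∑ j, W i j = 1) (i : Fin n) :
    W i i ≤ 1 :=
  hrow i ▸ single_le_sum (fun j _ => hnn i j) (mem_univ i)

theorem le_sum_mul_of_le (hnn : ∀ i j, 0 ≤ W i j) (hrow : ∀ i, ∑ j, W i j = 1) {c : ℝ}
    {y : Fin n → ℝ} (h : ∀ j, c ≤ y j) (i : Fin n) : c ≤ ∑ j, W i j * y j :=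
  calc c = ∑ j, W i j * c := by rw [← sum_mul, hrow, one_mul]
    _ ≤ ∑ j, W i j * y j := sum_le_sum fun j _ => mul_le_mul_of_nonneg_left (h j) (hnn i j)

theorem sum_mul_le_of_le (hnn : ∀ i j, 0 ≤ W i j) (hrow : ∀ i, ∑ j, W i j = 1) {c : ℝ}
    {y : Fin n → ℝ} (h : ∀ j, y j ≤ c) (i : Fin n) : ∑ j, W i j * y j ≤ c :=
  calc ∑ j, W i j * y j ≤ ∑ j, W i j * c :=
        sum_le_sum fun j _ => mul_le_mul_of_nonneg_left (h j) (hnn i j)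
    _ = c := by rw [← sum_mul, hrow, one_mul]

def netFlow (W : Matrix (Fin n) (Fin n) ℝ) (g : Fin n → ℝ) (i : Fin n) : ℝ :=
  ∑ j, W i j * (g j - g i)

theorem sum_netFlow (hsym : ∀ i j, W i j = W j i) (g : Fin n → ℝ) : ∑ i, netFlow W g i = 0 := by
  simp only [netFlow, mul_sub, sum_sub_distrib]
  rw [sub_eq_zero, sum_comm]
  exact sum_congr rfl fun i _ => sum_congr rfl fun j _ => by rw [hsym]

theorem netFlow_nonneg (hnn : ∀ i j, 0 ≤ W i j) {g : Fin n → ℝ} {i : Fin n}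
    (h : ∀ j, g i ≤ g j) : 0 ≤ netFlow W g i :=
  sum_nonneg fun j _ => mul_nonneg (hnn i j) (sub_nonneg.mpr (h j))

theorem Traj.succ_eq (hx : Traj W x) (hrow : ∀ i, ∑ j, W i j = 1) (k : ℕ) (i : Fin n) :
    x (k + 1) i = x k i + netFlow W (fun j => (⌊x k j⌋ : ℝ)) i := by
  rw [hx, netFlow]
  simp only [mul_sub, sum_sub_distrib, ← sum_mul, hrow, one_mul]
  ring

theorem Traj.sum_eq (hx : Traj W x) (hsym : ∀ i j, W i j = W j i) (hrow : ∀ i, ∑ j, W i j = 1)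
    (k : ℕ) : ∑ i, x k i = ∑ i, x 0 i := by
  induction k with
  | zero => rfl
  | succ k ih => simp only [hx.succ_eq hrow, sum_add_distrib, sum_netFlow hsym, add_zero, ih]

theorem Traj.floor_mem_Icc (hx : Traj W x) (hnn : ∀ i j, 0 ≤ W i j)
    (hrow : ∀ i, ∑ j, W i j = 1) {a b : ℤ} {k₀ : ℕ} (h : ∀ j, ⌊x k₀ j⌋ ∈ Set.Icc a b) {k : ℕ}
    (hk : k₀ ≤ k) (i : Fin n) : ⌊x k i⌋ ∈ Set.Icc a b := by
  induction k, hk using Nat.le_induction generalizing i with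
  | base => exact h i
  | succ k _ ih =>
    have hlo := le_sum_mul_of_le hnn hrow
      (fun j => (Int.cast_le.mpr (ih j).1 : (a : ℝ) ≤ ⌊x k j⌋)) i
    have hhi := sum_mul_le_of_le hnn hrow
      (fun j => (Int.cast_le.mpr (ih j).2 : (⌊x k j⌋ : ℝ) ≤ b)) i
    have hfrac := Int.floor_le (x k i)
    have hfrac' := Int.lt_floor_add_one (x k i)
    rw [hx]
    exact ⟨Int.le_floor.mpr (by linarith), Int.floor_le_iff.mpr (by linarith)⟩

theorem Traj.eq_of_floor_eq (hx : Traj W x) (hrow : ∀ i, ∑ j, W i j = 1) {c : ℤ} {k₀ : ℕ}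
    (h : ∀ j, ⌊x k₀ j⌋ = c) {k : ℕ} (hk : k₀ ≤ k) : x k = x k₀ := by
  induction k, hk using Nat.le_induction with
  | base => rfl
  | succ k _ ih =>
    funext i
    simp [hx.succ_eq hrow, netFlow, ih, h]

theorem Traj.mul_sub_mem_range (hx : Traj W x) {Q : ℕ}
    (hQ : ∀ i j, (Q : ℝ) * W i j ∈ (Int.castRingHom ℝ).range) (k : ℕ) (i : Fin n) :
    (Q : ℝ) * (x k i - x 0 i) ∈ (Int.castRingHom ℝ).range := by
  induction k generalizing i with
  | zero => simp
  | succ k ih =>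
    have h : (Q : ℝ) * (x (k + 1) i - x 0 i)
        = Q * (x k i - x 0 i) + ∑ j, Q * W i j * ⌊x k j⌋ - Q * ⌊x k i⌋ := by
      have hsum : ∑ j, (Q : ℝ) * W i j * ⌊x k j⌋ = Q * ∑ j, W i j * ⌊x k j⌋ := by
        rw [mul_sum]
        simp only [mul_assoc]
      rw [hx, hsum]
      ring
    rw [h]
    exact sub_mem (add_mem (ih i) (sum_mem fun j _ => mul_mem (hQ i j) (intCast_mem _ _)))
      (mul_mem (natCast_mem _ _) (intCast_mem _ _))

theorem Traj.exists_isPeriodicFrom (hx : Traj W x) (hnn : ∀ i j, 0 ≤ W i j)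
    (hrow : ∀ i, ∑ j, W i j = 1) (hrat : ∀ i j, W i j ∈ (Rat.castHom ℝ).range) :
    ∃ k₁ p, IsPeriodicFrom x k₁ p := by
  obtain ⟨Q, hQ, hQW⟩ :=
    exists_nat_mul_mem_range_intCast (fun ij : Fin n × Fin n => W ij.1 ij.2) fun ij => hrat _ _
  set N : ℤ := ∑ j, |⌊x 0 j⌋|
  have h0 : ∀ j, ⌊x 0 j⌋ ∈ Set.Icc (-N) N := fun j =>
    abs_le.mp (single_le_sum (f := fun j => |⌊x 0 j⌋|) (fun j _ => abs_nonneg _) (mem_univ j))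
  have hbound : ∀ k i, x k i ∈ Set.Icc (-N : ℝ) (N + 1) := fun k i => by
    have hfl := hx.floor_mem_Icc hnn hrow h0 (Nat.zero_le k) i
    have h1 : ((-N : ℤ) : ℝ) ≤ ⌊x k i⌋ := Int.cast_le.mpr hfl.1
    have h2 : (⌊x k i⌋ : ℝ) ≤ (N : ℤ) := Int.cast_le.mpr hfl.2
    push_cast at h1
    exact ⟨h1.trans (Int.floor_le _), by linarith [Int.lt_floor_add_one (x k i)]⟩
  set S : Set (Fin n → ℝ) := Set.univ.pi fun i =>
    {y | y ∈ Set.Icc (-N : ℝ) (N + 1) ∧ (Q : ℝ) * (y - x 0 i) ∈ (Int.castRingHom ℝ).range}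
  have hS : S.Finite := Set.Finite.pi fun i =>
    finite_setOf_mem_Icc_mul_sub_mem_range _ _ (x 0 i) (Nat.cast_pos.mpr hQ)
  have hxS : ∀ k, x k ∈ S := fun k => Set.mem_univ_pi.mpr fun i =>
    ⟨hbound k i, hx.mul_sub_mem_range (fun i j => hQW (i, j)) k i⟩
  refine exists_isPeriodicFrom_of_mem_finite (fun a b hab => funext fun i => ?_) hS hxS
  rw [hx, hx, hab]

noncomputable def clippedFloor (m : ℤ) (u : Fin n → ℝ) (i : Fin n) : ℝ :=
  max (⌊u i⌋ : ℝ) (m + 1)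

def threshold (W : Matrix (Fin n) (Fin n) ℝ) (m : ℤ) (i : Fin n) : ℝ :=
  m + 2 - W i i

noncomputable def excess (W : Matrix (Fin n) (Fin n) ℝ) (m : ℤ) (u : Fin n → ℝ) (i : Fin n) : ℝ :=
  max (u i - threshold W m i) 0

theorem le_floor_of_threshold_lt {m : ℤ} {u : Fin n → ℝ} {i : Fin n} (hW : W i i ≤ 1)
    (h : threshold W m i < u i) : m + 1 ≤ ⌊u i⌋ :=
  Int.le_floor.mpr (by push_cast; unfold threshold at h; linarith)

theorem floor_le_of_le_threshold {m : ℤ} {u : Fin n → ℝ} {i : Fin n} (hW : 0 < W i i)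
    (h : u i ≤ threshold W m i) : ⌊u i⌋ ≤ m + 1 := by
  have : ⌊u i⌋ < m + 2 := Int.floor_lt.mpr (by push_cast; unfold threshold at h; linarith)
  omega

theorem neg_le_netFlow_clippedFloor (hnn : ∀ i j, 0 ≤ W i j) (hrow : ∀ i, ∑ j, W i j = 1)
    (m : ℤ) (u : Fin n → ℝ) (i : Fin n) :
    -((1 - W i i) * (clippedFloor m u i - (m + 1))) ≤ netFlow W (clippedFloor m u) i := by
  set g := clippedFloor m u
  have hsum : W i i * (g i - (m + 1)) ≤ ∑ j, W i j * (g j - (m + 1)) :=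
    single_le_sum (f := fun j => W i j * (g j - (m + 1)))
      (fun j _ => mul_nonneg (hnn i j) (sub_nonneg.mpr (le_max_right _ _))) (mem_univ i)
  have hflow : netFlow W g i = ∑ j, W i j * (g j - (m + 1)) - (g i - (m + 1)) := by
    simp only [netFlow, mul_sub, sum_sub_distrib, ← sum_mul, hrow, one_mul]
    ring
  rw [hflow]
  linarith

theorem excess_add_netFlow_pos (hnn : ∀ i j, 0 ≤ W i j) (hrow : ∀ i, ∑ j, W i j = 1)
    (hdiag : ∀ i, 1 / 2 < W i i) {m : ℤ} {u : Fin n → ℝ} {i : Fin n}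
    (h : threshold W m i < u i) : 0 < excess W m u i + netFlow W (clippedFloor m u) i := by
  have hWle := diag_le_one hnn hrow i
  have hfl := le_floor_of_threshold_lt hWle h
  have he : excess W m u i = u i - threshold W m i := max_eq_left (sub_pos.mpr h).le
  have hg : clippedFloor m u i = ⌊u i⌋ := max_eq_left (by exact_mod_cast hfl)
  have hflow := neg_le_netFlow_clippedFloor hnn hrow m u i
  rw [hg] at hflow
  rw [he]
  rcases hfl.eq_or_lt with hfl | hfl
  · rw [← hfl] at hflow
    push_cast at hflow
    linarith
  · -- a floor `f ≥ m + 2` gives `excess + netFlow ≥ w_ii (f - m) - 1 ≥ 2 w_ii - 1 > 0`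
    have hfl' : (m : ℝ) + 2 ≤ ⌊u i⌋ := by exact_mod_cast (show m + 2 ≤ ⌊u i⌋ by omega)
    have hu := Int.floor_le (u i)
    unfold threshold
    nlinarith [hdiag i]

theorem excess_add_netFlow_nonneg (hnn : ∀ i j, 0 ≤ W i j) (hrow : ∀ i, ∑ j, W i j = 1)
    (hdiag : ∀ i, 1 / 2 < W i i) (m : ℤ) (u : Fin n → ℝ) (i : Fin n) :
    0 ≤ excess W m u i + netFlow W (clippedFloor m u) i := by
  rcases lt_or_ge (threshold W m i) (u i) with h | h
  · exact (excess_add_netFlow_pos hnn hrow hdiag h).le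
  · have hfl := floor_le_of_le_threshold (by linarith [hdiag i]) h
    have hg : clippedFloor m u i = m + 1 := max_eq_right (by exact_mod_cast hfl)
    exact add_nonneg (le_max_right _ _)
      (netFlow_nonneg hnn fun j => hg ▸ le_max_right _ _)

theorem Traj.excess_succ_le (hx : Traj W x) (hnn : ∀ i j, 0 ≤ W i j)
    (hrow : ∀ i, ∑ j, W i j = 1) (hdiag : ∀ i, 1 / 2 < W i i) {m : ℤ} {k : ℕ}
    (hm : ∀ j, m ≤ ⌊x k j⌋) (i : Fin n) :
    excess W m (x (k + 1)) i ≤ excess W m (x k) i + netFlow W (clippedFloor m (x k)) i := by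
  set g := clippedFloor m (x k)
  have hsum : W i i * (g i - ⌊x k i⌋) ≤ ∑ j, W i j * (g j - ⌊x k j⌋) :=
    single_le_sum (f := fun j => W i j * (g j - ⌊x k j⌋))
      (fun j _ => mul_nonneg (hnn i j) (sub_nonneg.mpr (le_max_left _ _))) (mem_univ i)
  have hflow : netFlow W g i = ∑ j, W i j * g j - g i := by
    simp only [netFlow, mul_sub, sum_sub_distrib, ← sum_mul, hrow, one_mul]
  simp only [mul_sub, sum_sub_distrib] at hsum
  have hnext : x (k + 1) i ≤ x k i - ⌊x k i⌋ + g i + netFlow W g i - W i i * (g i - ⌊x k i⌋) := by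
    rw [hx]
    linarith
  refine max_le ?_ (excess_add_netFlow_nonneg hnn hrow hdiag m (x k) i)
  have he := le_max_right (x k i - threshold W m i) 0
  rcases (hm i).eq_or_lt with hfl | hfl
  · have hg : g i = m + 1 := max_eq_right (by rw [← hfl]; linarith)
    rw [hg, ← hfl] at hnext
    have := Int.lt_floor_add_one (x k i)
    rw [← hfl] at this
    unfold threshold
    unfold excess
    linarith
  · have hg : g i = ⌊x k i⌋ := max_eq_left (by exact_mod_cast hfl)
    rw [hg] at hnext
    unfold excess
    linarith [le_max_left (x k i - threshold W m i) 0]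

section Tail

variable {k₁ p : ℕ} {m : ℤ}

theorem Traj.floor_eq_of_forall_le_floor (hx : Traj W x) (hnn : ∀ i j, 0 ≤ W i j)
    (hrow : ∀ i, ∑ j, W i j = 1) (hper : IsPeriodicFrom x k₁ p) {a : Fin n}
    (hmin : ∀ k, k₁ ≤ k → ∀ j, 0 < W a j → ⌊x k a⌋ ≤ ⌊x k j⌋) {k : ℕ} (hk : k₁ ≤ k) {j : Fin n}
    (hj : 0 < W a j) : ⌊x k j⌋ = ⌊x k a⌋ := by
  have hd : ∀ k, k₁ ≤ k → ∀ j, 0 < W a j → (0 : ℝ) ≤ ⌊x k j⌋ - ⌊x k a⌋ := fun k hk j hj =>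
    sub_nonneg.mpr (Int.cast_le.mpr (hmin k hk j hj))
  have hmono : ∀ k, k₁ ≤ k → x k a ≤ x (k + 1) a := fun k hk => by
    rw [hx.succ_eq hrow]
    exact le_add_of_nonneg_right (sum_nonneg fun j _ => mul_nonneg_of_pos_imp (hnn a j) (hd k hk j))
  have hconst := (hper.comp fun v => v a).eq_of_monotone hmono
  have hflow : netFlow W (fun j => (⌊x k j⌋ : ℝ)) a = 0 := by
    have := hx.succ_eq hrow k a
    rw [hconst _ (Nat.le_succ_of_le hk), hconst k hk] at this
    linarith
  exact_mod_cast sub_eq_zero.mp (eq_zero_of_sum_mul_eq_zero (hnn a) (hd k hk) hflow hj)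

theorem Traj.floor_eq_of_forall_floor_le (hx : Traj W x) (hnn : ∀ i j, 0 ≤ W i j)
    (hrow : ∀ i, ∑ j, W i j = 1) (hper : IsPeriodicFrom x k₁ p) {a : Fin n}
    (hmax : ∀ k, k₁ ≤ k → ∀ j, 0 < W a j → ⌊x k j⌋ ≤ ⌊x k a⌋) {k : ℕ} (hk : k₁ ≤ k) {j : Fin n}
    (hj : 0 < W a j) : ⌊x k j⌋ = ⌊x k a⌋ := by
  have hd : ∀ k, k₁ ≤ k → ∀ j, 0 < W a j → (0 : ℝ) ≤ ⌊x k a⌋ - ⌊x k j⌋ := fun k hk j hj =>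
    sub_nonneg.mpr (Int.cast_le.mpr (hmax k hk j hj))
  have hflow : ∀ k, ∑ j, W a j * ((⌊x k a⌋ : ℝ) - ⌊x k j⌋) =
      -netFlow W (fun j => (⌊x k j⌋ : ℝ)) a := fun k => by
    rw [netFlow, ← sum_neg_distrib]
    exact sum_congr rfl fun j _ => by ring
  have hanti : ∀ k, k₁ ≤ k → x (k + 1) a ≤ x k a := fun k hk => by
    have := sum_nonneg fun j (_ : j ∈ univ) => mul_nonneg_of_pos_imp (hnn a j) (hd k hk j)
    rw [hflow] at this
    rw [hx.succ_eq hrow]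
    linarith
  have hconst := (hper.comp fun v => v a).eq_of_antitone hanti
  have hzero : ∑ j, W a j * ((⌊x k a⌋ : ℝ) - ⌊x k j⌋) = 0 := by
    have := hx.succ_eq hrow k a
    rw [hconst _ (Nat.le_succ_of_le hk), hconst k hk] at this
    rw [hflow]
    linarith
  exact_mod_cast (sub_eq_zero.mp (eq_zero_of_sum_mul_eq_zero (hnn a) (hd k hk) hzero hj)).symm

theorem Traj.floor_eq_of_floor_eq_min {G : SimpleGraph (Fin n)} (hx : Traj W x)
    (hnn : ∀ i j, 0 ≤ W i j) (hrow : ∀ i, ∑ j, W i j = 1) (hG : G.Connected)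
    (hadj : ∀ i j, G.Adj i j → 0 < W i j) (hper : IsPeriodicFrom x k₁ p)
    (hm : ∀ k, k₁ ≤ k → ∀ j, m ≤ ⌊x k j⌋) {a : Fin n} (ha : ∀ k, k₁ ≤ k → ⌊x k a⌋ = m)
    (b : Fin n) {k : ℕ} (hk : k₁ ≤ k) : ⌊x k b⌋ = m := by
  refine hG.mem_of_adj_closed (S := {a | ∀ k, k₁ ≤ k → ⌊x k a⌋ = m}) ?_ ha b k hk
  intro a b hab ha k hk
  rw [hx.floor_eq_of_forall_le_floor hnn hrow hper (fun k hk j _ => (ha k hk).symm ▸ hm k hk j) hk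
    (hadj a b hab), ha k hk]

theorem Traj.add_diag_le_succ (hx : Traj W x) (hnn : ∀ i j, 0 ≤ W i j)
    (hrow : ∀ i, ∑ j, W i j = 1) {k : ℕ} (hm : ∀ j, m ≤ ⌊x k j⌋) {i : Fin n}
    (h : m + W i i ≤ x k i) : m + W i i ≤ x (k + 1) i := by
  have hsum : W i i * ((⌊x k i⌋ : ℝ) - m) ≤ ∑ j, W i j * ((⌊x k j⌋ : ℝ) - m) :=
    single_le_sum (f := fun j => W i j * ((⌊x k j⌋ : ℝ) - m))
      (fun j _ => mul_nonneg (hnn i j) (sub_nonneg.mpr (Int.cast_le.mpr (hm j)))) (mem_univ i)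
  simp only [mul_sub, sum_sub_distrib, ← sum_mul, hrow, one_mul] at hsum
  have hfrac := Int.floor_le (x k i)
  rw [hx]
  rcases (hm i).eq_or_lt with hfl | hfl
  · rw [← hfl] at hsum ⊢
    linarith
  · have hfl' : (m : ℝ) + 1 ≤ ⌊x k i⌋ := by exact_mod_cast hfl
    nlinarith [hnn i i]

theorem Traj.add_diag_le {G : SimpleGraph (Fin n)} (hx : Traj W x) (hnn : ∀ i j, 0 ≤ W i j)
    (hrow : ∀ i, ∑ j, W i j = 1) (hG : G.Connected) (hadj : ∀ i j, G.Adj i j → 0 < W i j)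
    (hper : IsPeriodicFrom x k₁ p) (hm : ∀ k, k₁ ≤ k → ∀ j, m ≤ ⌊x k j⌋)
    (hne : ∃ j, ⌊x k₁ j⌋ ≠ m) {k : ℕ} (hk : k₁ ≤ k) (i : Fin n) : m + W i i ≤ x k i := by
  have hiff : ∀ k, k₁ ≤ k → (m + W i i ≤ x k i ↔ m + W i i ≤ x k₁ i) := fun k hk =>
    Eq.to_iff <| (hper.comp fun v => (m : ℝ) + W i i ≤ v i).eq_of_monotone
      (fun k hk => hx.add_diag_le_succ hnn hrow (hm k hk)) k hk
  by_contra hlt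
  have hfloor : ∀ k', k₁ ≤ k' → ⌊x k' i⌋ = m := fun k' hk' => by
    have hlt' : x k' i < m + W i i := not_le.mp fun h => hlt ((hiff k hk).mpr ((hiff k' hk').mp h))
    have hfl : ⌊x k' i⌋ < m + 1 :=
      Int.floor_lt.mpr (by push_cast; linarith [diag_le_one hnn hrow i])
    exact le_antisymm (by omega) (hm k' hk' i)
  obtain ⟨j, hj⟩ := hne
  exact hj (hx.floor_eq_of_floor_eq_min hnn hrow hG hadj hper hm hfloor j le_rfl)

theorem Traj.excess_succ_eq (hx : Traj W x) (hsym : ∀ i j, W i j = W j i)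
    (hnn : ∀ i j, 0 ≤ W i j) (hrow : ∀ i, ∑ j, W i j = 1) (hdiag : ∀ i, 1 / 2 < W i i)
    (hper : IsPeriodicFrom x k₁ p) (hm : ∀ k, k₁ ≤ k → ∀ j, m ≤ ⌊x k j⌋) {k : ℕ} (hk : k₁ ≤ k)
    (i : Fin n) :
    excess W m (x (k + 1)) i = excess W m (x k) i + netFlow W (clippedFloor m (x k)) i := by
  have hle : ∀ k, k₁ ≤ k → ∀ i, excess W m (x (k + 1)) i ≤
      excess W m (x k) i + netFlow W (clippedFloor m (x k)) i := fun k hk =>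
    hx.excess_succ_le hnn hrow hdiag (hm k hk)
  have hsum : ∀ k, ∑ i, (excess W m (x k) i + netFlow W (clippedFloor m (x k)) i) =
      ∑ i, excess W m (x k) i := fun k => by rw [sum_add_distrib, sum_netFlow hsym, add_zero]
  -- the total excess is nonincreasing, hence constant along the periodic tail
  have hconst := (hper.comp fun v => ∑ i, excess W m v i).eq_of_antitone fun k hk =>
    (sum_le_sum fun i _ => hle k hk i).trans_eq (hsum k)
  refine (sum_eq_sum_iff_of_le fun i _ => hle k hk i).mp ?_ i (mem_univ i)
  rw [hsum, hconst _ (Nat.le_succ_of_le hk), hconst k hk]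

theorem Traj.threshold_lt_iff (hx : Traj W x) (hsym : ∀ i j, W i j = W j i)
    (hnn : ∀ i j, 0 ≤ W i j) (hrow : ∀ i, ∑ j, W i j = 1) (hdiag : ∀ i, 1 / 2 < W i i)
    (hper : IsPeriodicFrom x k₁ p) (hm : ∀ k, k₁ ≤ k → ∀ j, m ≤ ⌊x k j⌋) {k : ℕ} (hk : k₁ ≤ k)
    (i : Fin n) : threshold W m i < x k i ↔ threshold W m i < x k₁ i := by
  refine Eq.to_iff <| (hper.comp fun v => threshold W m i < v i).eq_of_monotone
    (fun k hk h => ?_) k hk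
  have hpos : 0 < excess W m (x (k + 1)) i := by
    rw [hx.excess_succ_eq hsym hnn hrow hdiag hper hm hk]
    exact excess_add_netFlow_pos hnn hrow hdiag h
  exact sub_pos.mp ((lt_max_iff.mp hpos).resolve_right (lt_irrefl 0))

theorem Traj.le_floor_neighbor_of_threshold_lt (hx : Traj W x) (hsym : ∀ i j, W i j = W j i)
    (hnn : ∀ i j, 0 ≤ W i j) (hrow : ∀ i, ∑ j, W i j = 1) (hdiag : ∀ i, 1 / 2 < W i i)
    (hper : IsPeriodicFrom x k₁ p) (hm : ∀ k, k₁ ≤ k → ∀ j, m ≤ ⌊x k j⌋) {a : Fin n}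
    (ha : threshold W m a < x k₁ a) {k : ℕ} (hk : k₁ ≤ k) {j : Fin n} (hj : 0 < W a j) :
    m + 1 ≤ ⌊x k j⌋ := by
  have habove : ∀ k, k₁ ≤ k → threshold W m a < x k a := fun k hk =>
    (hx.threshold_lt_iff hsym hnn hrow hdiag hper hm hk a).mpr ha
  set g := clippedFloor m (x k)
  have hga : g a = ⌊x k a⌋ :=
    max_eq_left (by exact_mod_cast le_floor_of_threshold_lt (diag_le_one hnn hrow a) (habove k hk))
  -- `a` stays above its threshold, so the exact balance says `x` moves at `a` by the clipped
  -- net flow; comparing with the actual floors forces `g j = ⌊x k j⌋` at every neighbour `j`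
  have htight := hx.excess_succ_eq hsym hnn hrow hdiag hper hm hk a
  rw [excess, excess, max_eq_left (sub_pos.mpr (habove _ (Nat.le_succ_of_le hk))).le,
    max_eq_left (sub_pos.mpr (habove k hk)).le, hx.succ_eq hrow] at htight
  have hzero : ∑ j, W a j * (g j - ⌊x k j⌋) = 0 := by
    have : netFlow W g a - netFlow W (fun j => (⌊x k j⌋ : ℝ)) a = 0 := by linarith
    rw [← this, netFlow, netFlow, ← sum_sub_distrib]
    refine sum_congr rfl fun j _ => ?_
    rw [hga]
    ring
  have := eq_zero_of_sum_mul_eq_zero (hnn a) (fun j _ => sub_nonneg.mpr (le_max_left _ _)) hzero hj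
  have hgj : (m : ℝ) + 1 ≤ ⌊x k j⌋ := (sub_eq_zero.mp this) ▸ le_max_right _ _
  exact_mod_cast hgj

theorem Traj.floor_neighbor_le_of_le_threshold (hx : Traj W x) (hsym : ∀ i j, W i j = W j i)
    (hnn : ∀ i j, 0 ≤ W i j) (hrow : ∀ i, ∑ j, W i j = 1) (hdiag : ∀ i, 1 / 2 < W i i)
    (hper : IsPeriodicFrom x k₁ p) (hm : ∀ k, k₁ ≤ k → ∀ j, m ≤ ⌊x k j⌋) {a : Fin n}
    (ha : x k₁ a ≤ threshold W m a) {k : ℕ} (hk : k₁ ≤ k) {j : Fin n} (hj : 0 < W a j) :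
    ⌊x k j⌋ ≤ m + 1 := by
  have hbelow : ∀ k, k₁ ≤ k → x k a ≤ threshold W m a := fun k hk =>
    not_lt.mp fun h => (not_lt.mpr ha) ((hx.threshold_lt_iff hsym hnn hrow hdiag hper hm hk a).mp h)
  have hga : clippedFloor m (x k) a = m + 1 :=
    max_eq_right (by exact_mod_cast floor_le_of_le_threshold (by linarith [hdiag a]) (hbelow k hk))
  have htight := hx.excess_succ_eq hsym hnn hrow hdiag hper hm hk a
  rw [excess, excess, max_eq_right (sub_nonpos.mpr (hbelow _ (Nat.le_succ_of_le hk))),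
    max_eq_right (sub_nonpos.mpr (hbelow k hk)), zero_add, netFlow, hga] at htight
  have := eq_zero_of_sum_mul_eq_zero (hnn a) (fun j _ => sub_nonneg.mpr (le_max_right _ _))
    htight.symm hj
  have hgj : (⌊x k j⌋ : ℝ) ≤ m + 1 := (sub_eq_zero.mp this) ▸ le_max_left _ _
  exact_mod_cast hgj

theorem Traj.le_threshold {G : SimpleGraph (Fin n)} (hx : Traj W x) (hsym : ∀ i j, W i j = W j i)
    (hnn : ∀ i j, 0 ≤ W i j) (hrow : ∀ i, ∑ j, W i j = 1) (hdiag : ∀ i, 1 / 2 < W i i)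
    (hG : G.Connected) (hadj : ∀ i j, G.Adj i j → 0 < W i j) (hper : IsPeriodicFrom x k₁ p)
    (hm : ∀ k, k₁ ≤ k → ∀ j, m ≤ ⌊x k j⌋) {u : Fin n} (hu : ⌊x k₁ u⌋ = m) {k : ℕ}
    (hk : k₁ ≤ k) (i : Fin n) : x k i ≤ threshold W m i := by
  have hiff := fun {k} (hk : k₁ ≤ k) => hx.threshold_lt_iff hsym hnn hrow hdiag hper hm hk
  rw [← not_lt, hiff hk]
  intro hi
  -- every node would stay at floor at least `m + 1`, but `u` sits at floor `m`
  suffices hA : ∀ b, ∀ k, k₁ ≤ k → m + 1 ≤ ⌊x k b⌋ by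
    have := hA u k₁ le_rfl
    omega
  refine hG.mem_of_adj_closed (S := {a | ∀ k, k₁ ≤ k → m + 1 ≤ ⌊x k a⌋}) ?_
    (fun k hk => le_floor_of_threshold_lt (diag_le_one hnn hrow i) ((hiff hk i).mpr hi))
  intro a b hab ha k hk
  by_cases hθ : threshold W m a < x k₁ a
  · exact hx.le_floor_neighbor_of_threshold_lt hsym hnn hrow hdiag hper hm hθ hk (hadj a b hab)
  · have hnbr := fun {k} (hk : k₁ ≤ k) {j} (hj : 0 < W a j) =>
      hx.floor_neighbor_le_of_le_threshold hsym hnn hrow hdiag hper hm (not_lt.mp hθ) hk hj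
    have hfa : ∀ k, k₁ ≤ k → ⌊x k a⌋ = m + 1 := fun k hk => le_antisymm
      (floor_le_of_le_threshold (by linarith [hdiag a])
        (not_lt.mp fun h => hθ ((hiff hk a).mp h))) (ha k hk)
    rw [hx.floor_eq_of_forall_floor_le hnn hrow hper
      (fun k hk j hj => (hnbr hk hj).trans (hfa k hk).ge) hk (hadj a b hab), hfa k hk]

theorem Traj.abs_sub_le_one_sub_diag {G : SimpleGraph (Fin n)} (hx : Traj W x)
    (hsym : ∀ i j, W i j = W j i) (hnn : ∀ i j, 0 ≤ W i j) (hrow : ∀ i, ∑ j, W i j = 1)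
    (hdiag : ∀ i, 1 / 2 < W i i) (hG : G.Connected) (hadj : ∀ i j, G.Adj i j → 0 < W i j)
    (hper : IsPeriodicFrom x k₁ p) (hm : ∀ k, k₁ ≤ k → ∀ j, m ≤ ⌊x k j⌋) {u : Fin n}
    (hu : ⌊x k₁ u⌋ = m) (hne : ∃ j, ⌊x k₁ j⌋ ≠ m) {k : ℕ} (hk : k₁ ≤ k) (i : Fin n) :
    |x k i - (m + 1)| ≤ 1 - W i i := by
  have hlo := hx.add_diag_le hnn hrow hG hadj hper hm hne hk i
  have hhi := hx.le_threshold hsym hnn hrow hdiag hG hadj hper hm hu hk i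
  unfold threshold at hhi
  rw [abs_le]
  constructor <;> linarith

end Tail

end Dynamics

/-- Proposition 4 (main convergence result): in finite time either the values cycle in a
small neighborhood of the average, or quantized consensus is reached. -/
theorem main_convergence {n : ℕ} (hn : 1 < n)
    (G : SimpleGraph (Fin n)) (hG : G.Connected)
    (W : Matrix (Fin n) (Fin n) ℝ) (hW : Assumption1 G W)
    (x : ℕ → Fin n → ℝ) (hx : Traj W x)
    (γ : ℝ) (hγ : GammaSetup W x γ) :
    ∃ K : ℕ, ∀ k, K ≤ k →
      ((∀ i j, |x k i - x k j| ≤ alpha W γ i + alpha W γ j) ∧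
        (∀ i, |x k i - (1 / (n : ℝ)) * ∑ p, x 0 p| ≤
          2 * Finset.univ.sup' ⟨⟨0, Nat.zero_lt_one.trans hn⟩, Finset.mem_univ _⟩
            (alpha W γ))) ∨
      ((∀ i j, ⌊x k i⌋ = ⌊x k j⌋) ∧
        (∀ i, |x k i - (1 / (n : ℝ)) * ∑ p, x 0 p| < 1)) := by
  have hrat := hW.mem_range_ratCast
  obtain ⟨hsym, hnn, hrow, hdiag, -, hedge⟩ := hW
  have hadj : ∀ i j, G.Adj i j → 0 < W i j := fun i j h => (hedge i j h).2.1
  have hn0 : 0 < n := by omega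
  have : Nonempty (Fin n) := ⟨⟨0, hn0⟩⟩
  obtain ⟨k₁, p, hper⟩ := hx.exists_isPeriodicFrom hnn hrow hrat
  obtain ⟨u, hu⟩ := Finite.exists_min fun j => ⌊x k₁ j⌋
  obtain ⟨v, hv⟩ := Finite.exists_max fun j => ⌊x k₁ j⌋
  set m := ⌊x k₁ u⌋
  have hm : ∀ k, k₁ ≤ k → ∀ j, m ≤ ⌊x k j⌋ := fun k hk j =>
    (hx.floor_mem_Icc hnn hrow (fun j => ⟨hu j, hv j⟩) hk j).1
  refine ⟨k₁, fun k hk => ?_⟩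
  rw [← hx.sum_eq hsym hrow k]
  by_cases hcons : ∀ j, ⌊x k₁ j⌋ = m
  · have hxk := hx.eq_of_floor_eq hrow hcons hk
    refine Or.inr ⟨fun i j => by rw [hxk, hcons i, hcons j], abs_sub_average_lt_one (c := m) hn0 ?_⟩
    exact fun j => by rw [hxk, hcons j]
  · simp only [not_forall] at hcons
    have hband : ∀ j, |x k j - (m + 1)| ≤ alpha W γ j := fun j =>
      (hx.abs_sub_le_one_sub_diag hsym hnn hrow hdiag hG hadj hper hm rfl hcons hk j).trans
        (by unfold alpha; linarith [hγ.1])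
    refine Or.inl ⟨fun i j => (abs_sub_le _ (m + 1 : ℝ) _).trans ?_, abs_sub_average_le hn0
      fun j => (hband j).trans (le_sup' (alpha W γ) (mem_univ j))⟩
    rw [abs_sub_comm (m + 1 : ℝ)]
    exact add_le_add (hband i) (hband j)
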